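/- For k ≥ 1 and t ∈ (0,1), let μ_t = (1 − t^k + t^{k+1}) δ_{−t^k} + (t^k − t^{k+1}) δ_{1−t^k}. Then for each t, μ_t has negative mean; the family (μ_t)_{t∈(0,1)} is non-decreasing in the WDS order; and it is not non-increasing in the usual stochastic order (indeed t ↦ μ_t([0,∞)) = t^k − t^{k+1} is not non-increasing). -/

import Mathlib

open MeasureTheory Set Filter

noncomputable def meanM (μ : Measure ℝ) : ℝ := ∫ y, y ∂μ

noncomputable def rSupE (μ : Measure ℝ) : EReal :=
  sInf ((fun z : ℝ => (z : EReal)) '' {z : ℝ | μ (Ici z) = 0})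

noncomputable def psiWds (μ : Measure ℝ) (x : ℝ) : EReal :=
  if (x : EReal) < rSupE μ then
    ((((∫ y in Ici x, y ∂μ) - meanM μ) / (μ (Ici x)).toReal : ℝ) : EReal)
  else ⊤

noncomputable def Kfun (μ : Measure ℝ) (x : ℝ) : ℝ :=
  (∫ y in Ici x, (y - x) ∂μ) - meanM μ

noncomputable def muD (k : ℕ) (t : ℝ) : Measure ℝ :=
  ENNReal.ofReal (1 - t ^ k + t ^ (k + 1)) • Measure.dirac (-(t ^ k))
    + ENNReal.ofReal (t ^ k - t ^ (k + 1)) • Measure.dirac (1 - t ^ k)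

/-!
Each `muD k t` is a two-point measure `a δ_p + b δ_q` with `p < q` and `b > 0`. For such a
measure `psiWds` vanishes on `(-∞, p]`, equals `-a p / b` on `(p, q)` and is `⊤` on `[q, ∞)`.
For `muD k t` the middle value is `1 / (1 - t) - t ^ k = ∑_{i ≠ k} t ^ i`, a power series with
nonnegative coefficients and hence non-decreasing in `t`; both breakpoints `-t ^ k` and
`1 - t ^ k` move left as `t` grows, so `psiWds (muD k t)` is non-decreasing pointwise. The mass
`t ^ k (1 - t)` of `[0, ∞)` increases for small `t`, so the family is not stochastically
non-increasing.
-/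

noncomputable def twoPoint (a b p q : ℝ) : Measure ℝ :=
  ENNReal.ofReal a • Measure.dirac p + ENNReal.ofReal b • Measure.dirac q

section TwoPoint

variable {a b p q : ℝ}

lemma twoPoint_Ici (a b p q x : ℝ) :
    twoPoint a b p q (Ici x) =
      (if x ≤ p then ENNReal.ofReal a else 0) + (if x ≤ q then ENNReal.ofReal b else 0) := by
  simp [twoPoint, Measure.dirac_apply' _ measurableSet_Ici, indicator_apply]

lemma setIntegral_twoPoint (ha : 0 ≤ a) (hb : 0 ≤ b) (s : Set ℝ) [Decidable (p ∈ s)]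
    [Decidable (q ∈ s)] :
    ∫ y in s, y ∂twoPoint a b p q =
      a * (if p ∈ s then p else 0) + b * (if q ∈ s then q else 0) := by
  have hint : ∀ c : ℝ, Integrable (fun y : ℝ => y) ((Measure.dirac c).restrict s) :=
    fun c => (integrable_dirac enorm_lt_top).restrict
  rw [twoPoint, Measure.restrict_add, Measure.restrict_smul, Measure.restrict_smul,
    integral_add_measure ((hint p).smul_measure ENNReal.ofReal_ne_top)
      ((hint q).smul_measure ENNReal.ofReal_ne_top),
    integral_smul_measure, integral_smul_measure, setIntegral_dirac, setIntegral_dirac,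
    ENNReal.toReal_ofReal ha, ENNReal.toReal_ofReal hb, smul_eq_mul, smul_eq_mul]

lemma meanM_twoPoint (ha : 0 ≤ a) (hb : 0 ≤ b) : meanM (twoPoint a b p q) = a * p + b * q := by
  rw [meanM, ← setIntegral_univ, setIntegral_twoPoint ha hb]
  simp

lemma rSupE_twoPoint (hpq : p ≤ q) (hb : 0 < b) : rSupE (twoPoint a b p q) = q := by
  have hnull : {z : ℝ | twoPoint a b p q (Ici z) = 0} = Ioi q := by
    ext z
    by_cases hzq : z ≤ q
    · simp [twoPoint_Ici, hzq, hb, not_lt.mpr hzq]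
    · have hzp : ¬z ≤ p := fun hzp => hzq (hzp.trans hpq)
      simp [twoPoint_Ici, hzq, hzp, not_le.mp hzq]
  rw [rSupE, hnull, EReal.image_coe_Ioi, csInf_Ioo (EReal.coe_lt_top q)]

lemma psiWds_twoPoint_of_le_left (ha : 0 ≤ a) (hb : 0 < b) (hpq : p < q) {x : ℝ}
    (hx : x ≤ p) :
    psiWds (twoPoint a b p q) x = 0 := by
  rw [psiWds, if_pos (by rw [rSupE_twoPoint hpq.le hb]; exact_mod_cast hx.trans_lt hpq),
    setIntegral_twoPoint ha hb.le, meanM_twoPoint ha hb.le]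
  simp [hx, hx.trans hpq.le]

lemma psiWds_twoPoint_of_mem_Ioo (ha : 0 ≤ a) (hb : 0 < b) {x : ℝ} (hx : x ∈ Ioo p q) :
    psiWds (twoPoint a b p q) x = ((-(a * p) / b : ℝ) : EReal) := by
  rw [psiWds, if_pos (by rw [rSupE_twoPoint (hx.1.trans hx.2).le hb]; exact_mod_cast hx.2),
    setIntegral_twoPoint ha hb.le, meanM_twoPoint ha hb.le, twoPoint_Ici,
    if_neg (not_le.mpr hx.1), if_pos hx.2.le]
  simp [hx.1.not_ge, hx.2.le, ENNReal.toReal_ofReal hb.le]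

lemma psiWds_twoPoint_of_le_right (hpq : p ≤ q) (hb : 0 < b) {x : ℝ} (hx : q ≤ x) :
    psiWds (twoPoint a b p q) x = ⊤ := by
  rw [psiWds, if_neg (by rw [rSupE_twoPoint hpq hb]; exact_mod_cast hx.not_gt)]

end TwoPoint

section MuD

variable {k : ℕ} {t : ℝ}

lemma muD_eq_twoPoint (k : ℕ) (t : ℝ) :
    muD k t = twoPoint (1 - t ^ k + t ^ (k + 1)) (t ^ k * (1 - t)) (-(t ^ k)) (1 - t ^ k) := by
  rw [muD, twoPoint, pow_succ, mul_one_sub]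

lemma muD_weights_pos (ht : t ∈ Ioo (0 : ℝ) 1) :
    0 < 1 - t ^ k + t ^ (k + 1) ∧ 0 < t ^ k * (1 - t) := by
  have htk : t ^ k ≤ 1 := pow_le_one₀ ht.1.le ht.2.le
  have htk1 : 0 < t ^ (k + 1) := pow_pos ht.1 _
  exact ⟨by linarith, mul_pos (pow_pos ht.1 _) (sub_pos.mpr ht.2)⟩

lemma meanM_muD (ht : t ∈ Ioo (0 : ℝ) 1) : meanM (muD k t) = -t ^ (k + 1) := by
  obtain ⟨ha, hb⟩ := muD_weights_pos (k := k) ht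
  rw [muD_eq_twoPoint, meanM_twoPoint ha.le hb.le]
  ring

noncomputable def wdsLevel (k : ℕ) (t : ℝ) : ℝ :=
  ∑ i ∈ Finset.range k, t ^ i + t ^ (k + 1) / (1 - t)

lemma wdsLevel_nonneg (ht : t ∈ Ioo (0 : ℝ) 1) : 0 ≤ wdsLevel k t := by
  have ht0 := ht.1
  have ht1 := sub_pos.mpr ht.2
  unfold wdsLevel
  positivity

lemma wdsLevel_mono {s : ℝ} (hs : 0 ≤ s) (ht : t < 1) (hst : s ≤ t) :
    wdsLevel k s ≤ wdsLevel k t := by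
  have ht0 : 0 ≤ t := hs.trans hst
  unfold wdsLevel
  gcongr

lemma psiWds_muD_of_le_left (ht : t ∈ Ioo (0 : ℝ) 1) {x : ℝ} (hx : x ≤ -(t ^ k)) :
    psiWds (muD k t) x = 0 := by
  obtain ⟨ha, hb⟩ := muD_weights_pos (k := k) ht
  rw [muD_eq_twoPoint]
  exact psiWds_twoPoint_of_le_left ha.le hb (by linarith) hx

lemma psiWds_muD_of_mem_Ioo (ht : t ∈ Ioo (0 : ℝ) 1) {x : ℝ}
    (hx : x ∈ Ioo (-(t ^ k)) (1 - t ^ k)) :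
    psiWds (muD k t) x = wdsLevel k t := by
  obtain ⟨ha, hb⟩ := muD_weights_pos (k := k) ht
  rw [muD_eq_twoPoint, psiWds_twoPoint_of_mem_Ioo ha.le hb hx, wdsLevel,
    geom_sum_eq ht.2.ne]
  have : t - 1 ≠ 0 := sub_ne_zero.mpr ht.2.ne
  have : 1 - t ≠ 0 := sub_ne_zero.mpr ht.2.ne'
  have : t ^ k ≠ 0 := pow_ne_zero _ ht.1.ne'
  congr 1
  field_simp
  ring

lemma psiWds_muD_of_le_right (ht : t ∈ Ioo (0 : ℝ) 1) {x : ℝ} (hx : 1 - t ^ k ≤ x) :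
    psiWds (muD k t) x = ⊤ := by
  rw [muD_eq_twoPoint]
  exact psiWds_twoPoint_of_le_right (by linarith) (muD_weights_pos ht).2 hx

lemma psiWds_muD_mono {s : ℝ} (hs : s ∈ Ioo (0 : ℝ) 1) (ht : t ∈ Ioo (0 : ℝ) 1)
    (hst : s ≤ t) (x : ℝ) : psiWds (muD k s) x ≤ psiWds (muD k t) x := by
  have hpow : s ^ k ≤ t ^ k := pow_le_pow_left₀ hs.1.le hst k
  rcases le_or_gt x (-(t ^ k)) with hxt | hxt
  · rw [psiWds_muD_of_le_left ht hxt, psiWds_muD_of_le_left hs (by linarith)]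
  rcases le_or_gt (1 - t ^ k) x with hxt' | hxt'
  · rw [psiWds_muD_of_le_right ht hxt']
    exact le_top
  rw [psiWds_muD_of_mem_Ioo ht ⟨hxt, hxt'⟩]
  rcases le_or_gt x (-(s ^ k)) with hxs | hxs
  · rw [psiWds_muD_of_le_left hs hxs]
    exact_mod_cast wdsLevel_nonneg ht
  · rw [psiWds_muD_of_mem_Ioo hs ⟨hxs, by linarith⟩]
    exact_mod_cast wdsLevel_mono hs.1.le ht.2 hst

lemma muD_Ici_zero (hk : 1 ≤ k) (ht : t ∈ Ioo (0 : ℝ) 1) :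
    muD k t (Ici 0) = ENNReal.ofReal (t ^ k * (1 - t)) := by
  have htk : 0 < t ^ k := pow_pos ht.1 _
  have htk1 : t ^ k < 1 := pow_lt_one₀ ht.1.le ht.2 (by omega)
  rw [muD_eq_twoPoint, twoPoint_Ici, if_neg (by linarith), if_pos (by linarith), zero_add]

lemma exists_muD_Ici_zero_lt (hk : 1 ≤ k) :
    ∃ s ∈ Ioo (0 : ℝ) 1, ∃ t ∈ Ioo (0 : ℝ) 1, s ≤ t ∧
      muD k s (Ici 0) < muD k t (Ici 0) := by
  refine ⟨1 / 4, by norm_num, 1 / 2, by norm_num, by norm_num, ?_⟩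
  rw [muD_Ici_zero hk (by norm_num), muD_Ici_zero hk (by norm_num),
    ENNReal.ofReal_lt_ofReal_iff (by positivity)]
  have hhalf : (1 / 2 : ℝ) ^ k ≤ 1 / 2 :=
    pow_le_of_le_one (by norm_num) (by norm_num) (by omega)
  have hquarter : (1 / 4 : ℝ) ^ k = (1 / 2) ^ k * (1 / 2) ^ k := by
    rw [← mul_pow]; norm_num
  have hpos : (0 : ℝ) < (1 / 2) ^ k := by positivity
  rw [hquarter]
  nlinarith

end MuD

theorem stmt15 (k : ℕ) (hk : 1 ≤ k) :
    (∀ t ∈ Ioo (0 : ℝ) 1, meanM (muD k t) < 0) ∧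
    (∀ s ∈ Ioo (0 : ℝ) 1, ∀ t ∈ Ioo (0 : ℝ) 1, s ≤ t →
      ∀ x : ℝ, psiWds (muD k s) x ≤ psiWds (muD k t) x) ∧
    ¬ (∀ s ∈ Ioo (0 : ℝ) 1, ∀ t ∈ Ioo (0 : ℝ) 1, s ≤ t →
      ∀ x : ℝ, muD k t (Ici x) ≤ muD k s (Ici x)) := by
  refine ⟨fun t ht => ?_, fun s hs t ht hst => psiWds_muD_mono hs ht hst, fun hanti => ?_⟩
  · rw [meanM_muD ht, neg_lt_zero]
    exact pow_pos ht.1 _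
  · obtain ⟨s, hs, t, ht, hst, hlt⟩ := exists_muD_Ici_zero_lt hk
    exact (hanti s hs t ht hst 0).not_gt hlt
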